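/- For all n, m ∈ ℕ the operator (U*)ⁿUᵐ is scalable with J((U*)ⁿUᵐ) = q^{n−m}(U*)ⁿUᵐ, and as operators on 𝒟: ∂((U*)ⁿUᵐ) = q^{n−m+1}[m]_q (U*)ⁿU^{m−1} and ∂̄((U*)ⁿUᵐ) = [n]_q (U*)^{n−1}Uᵐ (the right-hand sides being 0 when m = 0, resp. n = 0). Consequently, for n, m ≥ 1, iterating these formulas gives ∂̄(∂((U*)ⁿUᵐ)) = q·∂(∂̄((U*)ⁿUᵐ)) = q^{n−m+1}[m]_q [n]_q (U*)^{n−1}U^{m−1} on 𝒟. -/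

import Mathlib

open MeasureTheory InnerProductSpace

noncomputable section

/-- `H = ℓ²(ℕ, ℂ)`. -/
abbrev H : Type := lp (fun _ : ℕ => ℂ) 2

/-- The standard orthonormal basis `e n` of `ℓ²(ℕ, ℂ)`. -/
noncomputable def e (n : ℕ) : H := lp.single 2 n 1

/-- The operator `δ̄`, defined on `𝒟 = range j` by `δ̄(jψ) = q⁻¹(q−1)⁻¹ Uψ`. -/
noncomputable def dbar (q : ℝ) (U j : H →L[ℂ] H) (φ : H) : H :=
  ((q : ℂ)⁻¹ * ((q : ℂ) - 1)⁻¹) • U (Function.invFun (⇑j) φ)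

/-- The operator `δ`, defined on `𝒟 = range j` by `δ(jψ) = q(1−q)⁻¹ U*ψ`. -/
noncomputable def ddel (q : ℝ) (U j : H →L[ℂ] H) (φ : H) : H :=
  ((q : ℂ) * (1 - (q : ℂ))⁻¹) • (ContinuousLinearMap.adjoint U) (Function.invFun (⇑j) φ)

/-- The `q`-integer `[n]_q = (1−qⁿ)/(1−q)`, as a complex number. -/
noncomputable def Mq (q : ℝ) (n : ℕ) : ℂ := (((1 - q ^ n) / (1 - q) : ℝ) : ℂ)

/-- The monomial `(U*)ⁿUᵐ`. -/
noncomputable def mon (U : H →L[ℂ] H) (n m : ℕ) : H →L[ℂ] H :=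
  (ContinuousLinearMap.adjoint U) ^ n * U ^ m

/-!
With `A = U*`, the operators `A`, `U`, `j` satisfy the quantum-disc relations
`A U = 1 - q j`, `U A = 1 - j`, `j U = q U j`, `A j = q j A` (checked on the basis `e n`).
The last two make every monomial `Aⁿ Uᵐ` scalable with `J(Aⁿ Uᵐ) = q^{n-m} Aⁿ Uᵐ`, and for a
scalable `B` with `J(B) = ν B` an operator of the form `D(jψ) = c • T ψ` satisfies
`D(B jψ) - ν B D(jψ) = c ν [T, B] ψ`. Hence `∂` and `∂̄` of a monomial are computed by the
commutators `[A, Aⁿ Uᵐ]` and `[U, Aⁿ Uᵐ]`, which follow from the relations in any algebra.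
The iterated formulas then hold because `δ`, `δ̄` are linear on `𝒟` and monomials preserve `𝒟`.
-/

section QCommutation

variable {𝕜 R : Type*}

theorem pow_mul_eq_smul_mul_pow [CommSemiring 𝕜] [Semiring R] [Algebra 𝕜 R] {x y : R} {c : 𝕜}
    (h : x * y = c • (y * x)) (n : ℕ) : x ^ n * y = c ^ n • (y * x ^ n) := by
  induction n with
  | zero => simp
  | succ n ih =>
    rw [pow_succ, mul_assoc, h, mul_smul_comm, ← mul_assoc, ih, smul_mul_assoc, smul_smul,
      mul_assoc, ← pow_succ, ← pow_succ']

theorem mul_pow_eq_smul_pow_mul [CommSemiring 𝕜] [Semiring R] [Algebra 𝕜 R] {x y : R} {c : 𝕜}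
    (h : x * y = c • (y * x)) (n : ℕ) : x * y ^ n = c ^ n • (y ^ n * x) := by
  induction n with
  | zero => simp
  | succ n ih =>
    rw [pow_succ', ← mul_assoc, h, smul_mul_assoc, mul_assoc, ih, mul_smul_comm, smul_smul,
      ← mul_assoc, ← pow_succ', pow_succ']

variable [Field 𝕜] [Ring R] [Algebra 𝕜 R] {q : 𝕜} {a u t : R}

theorem pow_mul_pow_mul_eq_zpow_smul (htu : t * u = q • (u * t)) (hat : a * t = q • (t * a))
    (hq : q ≠ 0) (n m : ℕ) :
    a ^ n * u ^ m * t = q ^ ((n : ℤ) - m) • (t * (a ^ n * u ^ m)) := by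
  have hu : u ^ m * t = (q ^ m)⁻¹ • (t * u ^ m) := by
    rw [mul_pow_eq_smul_pow_mul htu, smul_smul, inv_mul_cancel₀ (pow_ne_zero m hq), one_smul]
  rw [mul_assoc, hu, mul_smul_comm, ← mul_assoc, pow_mul_eq_smul_mul_pow hat, smul_mul_assoc,
    smul_smul, mul_assoc, zpow_sub₀ hq, zpow_natCast, zpow_natCast, div_eq_inv_mul]

theorem commutator_adj_pow_mul_pow (hau : a * u = 1 - q • t) (hua : u * a = 1 - t)
    (htu : t * u = q • (u * t)) (n m : ℕ) :
    a * (a ^ n * u ^ m) - a ^ n * u ^ m * a = (1 - q ^ m) • (a ^ n * u ^ (m - 1) * t) := by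
  rcases m with _ | m
  · simp [← pow_succ, ← pow_succ']
  · have hl : a * (a ^ n * u ^ (m + 1)) = a ^ n * (a * u) * u ^ m := by
      rw [← mul_assoc, ← pow_succ', pow_succ, pow_succ', mul_assoc, mul_assoc, mul_assoc]
    have hr : a ^ n * u ^ (m + 1) * a = a ^ n * u ^ m * (u * a) := by
      rw [pow_succ, mul_assoc, mul_assoc, mul_assoc]
    rw [hl, hr, hau, hua, mul_sub, sub_mul, mul_sub, mul_smul_comm, smul_mul_assoc, mul_assoc _ t,
      mul_pow_eq_smul_pow_mul htu, Nat.add_sub_cancel]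
    simp only [mul_one, mul_smul_comm, smul_smul, ← mul_assoc, ← pow_succ']
    module

theorem commutator_shift_pow_mul_pow (hau : a * u = 1 - q • t) (hua : u * a = 1 - t)
    (htu : t * u = q • (u * t)) (hat : a * t = q • (t * a)) (hq : q ≠ 0) (n m : ℕ) :
    u * (a ^ n * u ^ m) - a ^ n * u ^ m * u
      = (q ^ (m + 1) - q ^ ((m : ℤ) - n + 1)) • (a ^ (n - 1) * u ^ m * t) := by
  rcases n with _ | n
  · simp [← pow_succ, ← pow_succ', ← zpow_natCast]
  · have hz : q ^ ((m : ℤ) - (n + 1 : ℕ) + 1) = (q ^ n)⁻¹ * q ^ m := by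
      rw [show (m : ℤ) - (n + 1 : ℕ) + 1 = m - n by push_cast; ring, zpow_sub₀ hq,
        zpow_natCast, zpow_natCast, div_eq_inv_mul]
    have hl : u * (a ^ (n + 1) * u ^ m) = u * a * (a ^ n * u ^ m) := by
      rw [pow_succ', mul_assoc, mul_assoc]
    have hr : a ^ (n + 1) * u ^ m * u = a ^ n * (a * u) * u ^ m := by
      rw [pow_succ, mul_assoc, mul_assoc, mul_assoc, ← pow_succ, pow_succ', mul_assoc]
    have ht_pow : t * a ^ n = (q ^ n)⁻¹ • (a ^ n * t) := by
      rw [pow_mul_eq_smul_mul_pow hat, smul_smul, inv_mul_cancel₀ (pow_ne_zero n hq), one_smul]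
    have hmid : a ^ n * t * u ^ m = q ^ m • (a ^ n * u ^ m * t) := by
      rw [mul_assoc, mul_pow_eq_smul_pow_mul htu, mul_smul_comm, mul_assoc]
    have ht_mon : t * (a ^ n * u ^ m) = (q ^ n)⁻¹ • (q ^ m • (a ^ n * u ^ m * t)) := by
      rw [← mul_assoc, ht_pow, smul_mul_assoc, hmid]
    rw [hl, hr, hau, hua, hz, Nat.add_sub_cancel]
    simp only [sub_mul, mul_sub, one_mul, mul_one, smul_mul_assoc, mul_smul_comm, ht_mon, hmid]
    module

end QCommutation

theorem inner_e_left (i : ℕ) (f : H) : inner ℂ (e i) f = f i := by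
  simp [e, lp.inner_single_left]

theorem inner_e_e (i k : ℕ) : inner ℂ (e i) (e k) = if i = k then 1 else 0 := by
  rw [inner_e_left, e, lp.single_apply]
  split_ifs with h <;> simp_all

theorem ext_e {T S : H →L[ℂ] H} (h : ∀ k, T (e k) = S (e k)) : T = S :=
  lp.ext_continuousLinearMap ENNReal.ofNat_ne_top fun k => ContinuousLinearMap.ext_ring (h k)

theorem ext_inner_e {f g : H} (h : ∀ i, inner ℂ (e i) f = inner ℂ (e i) g) : f = g :=
  lp.ext <| funext fun i => by simpa only [inner_e_left] using h i

section WeightedShift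

variable {q : ℝ} {U : H →L[ℂ] H}

theorem adjoint_e (hU : ∀ n : ℕ, U (e n) = (Real.sqrt (1 - q ^ (n + 1)) : ℂ) • e (n + 1))
    (k : ℕ) :
    ContinuousLinearMap.adjoint U (e k) = (Real.sqrt (1 - q ^ k) : ℂ) • e (k - 1) := by
  refine ext_inner_e fun i => ?_
  rw [ContinuousLinearMap.adjoint_inner_right, hU, inner_smul_left, inner_smul_right, inner_e_e,
    inner_e_e, Complex.conj_ofReal]
  rcases k with _ | k
  · simp
  · by_cases hik : i = k <;> simp [hik]


theorem adjoint_mul_self_eq (hq0 : 0 ≤ q) (hq1 : q ≤ 1)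
    (hU : ∀ n : ℕ, U (e n) = (Real.sqrt (1 - q ^ (n + 1)) : ℂ) • e (n + 1))
    {j : H →L[ℂ] H} (hj : ∀ n : ℕ, j (e n) = ((q : ℂ) ^ n) • e n) :
    ContinuousLinearMap.adjoint U * U = 1 - (q : ℂ) • j := by
  refine ext_e fun k => ?_
  have hk : (0 : ℝ) ≤ 1 - q ^ (k + 1) := sub_nonneg.2 (pow_le_one₀ hq0 hq1)
  rw [mul_apply_eq_comp, hU, map_smul, adjoint_e hU, Nat.add_sub_cancel, smul_smul,
    ← Complex.ofReal_mul, Real.mul_self_sqrt hk, sub_apply, one_apply_eq_self, smul_apply, hj,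
    smul_smul]
  push_cast
  module

theorem mul_adjoint_eq (hq0 : 0 ≤ q) (hq1 : q ≤ 1)
    (hU : ∀ n : ℕ, U (e n) = (Real.sqrt (1 - q ^ (n + 1)) : ℂ) • e (n + 1))
    {j : H →L[ℂ] H} (hj : ∀ n : ℕ, j (e n) = ((q : ℂ) ^ n) • e n) :
    U * ContinuousLinearMap.adjoint U = 1 - j := by
  refine ext_e fun k => ?_
  rw [mul_apply_eq_comp, adjoint_e hU, map_smul, sub_apply, one_apply_eq_self, hj]
  rcases k with _ | k
  · simp
  · have hk : (0 : ℝ) ≤ 1 - q ^ (k + 1) := sub_nonneg.2 (pow_le_one₀ hq0 hq1)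
    rw [hU, Nat.add_sub_cancel, smul_smul, ← Complex.ofReal_mul, Real.mul_self_sqrt hk]
    push_cast
    module

theorem j_mul_eq_smul (hU : ∀ n : ℕ, U (e n) = (Real.sqrt (1 - q ^ (n + 1)) : ℂ) • e (n + 1))
    {j : H →L[ℂ] H} (hj : ∀ n : ℕ, j (e n) = ((q : ℂ) ^ n) • e n) :
    j * U = (q : ℂ) • (U * j) := by
  refine ext_e fun k => ?_
  rw [mul_apply_eq_comp, hU, map_smul, hj, smul_apply, mul_apply_eq_comp, hj, map_smul, hU,
    smul_smul, smul_smul, smul_smul, pow_succ]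
  ring_nf

theorem adjoint_mul_j_eq_smul
    (hU : ∀ n : ℕ, U (e n) = (Real.sqrt (1 - q ^ (n + 1)) : ℂ) • e (n + 1))
    {j : H →L[ℂ] H} (hj : ∀ n : ℕ, j (e n) = ((q : ℂ) ^ n) • e n) :
    ContinuousLinearMap.adjoint U * j = (q : ℂ) • (j * ContinuousLinearMap.adjoint U) := by
  refine ext_e fun k => ?_
  rw [mul_apply_eq_comp, hj, map_smul, adjoint_e hU, smul_apply, mul_apply_eq_comp, adjoint_e hU,
    map_smul, hj, smul_smul, smul_smul, smul_smul]
  rcases k with _ | k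
  · simp
  · rw [Nat.add_sub_cancel, pow_succ]
    ring_nf

end WeightedShift

section Scalable

variable {𝕜 E : Type*} [NontriviallyNormedField 𝕜] [NormedAddCommGroup E] [NormedSpace 𝕜 E]
  {j : E →L[𝕜] E}

theorem invFun_smul_apply (hj : Function.Injective j) (κ : 𝕜) (ψ : E) :
    Function.invFun j (κ • j ψ) = κ • ψ := by
  rw [← map_smul, Function.leftInverse_invFun hj]

theorem apply_apply_eq_of_mul_eq_smul {B : E →L[𝕜] E} {ν : 𝕜} (hB : B * j = ν • (j * B))
    (ψ : E) : B (j ψ) = j (ν • B ψ) := by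
  rw [map_smul, ← mul_apply_eq_comp, hB, smul_apply, mul_apply_eq_comp]

theorem smul_apply_invFun_sub (hj : Function.Injective j) {B : E →L[𝕜] E} {ν : 𝕜}
    (hB : B * j = ν • (j * B)) (T : E →L[𝕜] E) (c : 𝕜) (ψ : E) :
    c • T (Function.invFun j (B (j ψ))) - ν • B (c • T (Function.invFun j (j ψ)))
      = (c * ν) • (T * B - B * T) ψ := by
  rw [apply_apply_eq_of_mul_eq_smul hB, Function.leftInverse_invFun hj,
    Function.leftInverse_invFun hj, sub_apply, mul_apply_eq_comp, mul_apply_eq_comp, map_smul,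
    map_smul, smul_sub, smul_smul, smul_smul, mul_comm ν]

end Scalable

section Derivations

variable {q : ℝ} {U j : H →L[ℂ] H}

theorem ddel_smul (hj : Function.Injective j) {φ : H} (hφ : φ ∈ Set.range j) (κ : ℂ) :
    ddel q U j (κ • φ) = κ • ddel q U j φ := by
  obtain ⟨ψ, rfl⟩ := hφ
  rw [ddel, ddel, invFun_smul_apply hj, Function.leftInverse_invFun hj, map_smul, smul_comm]

theorem dbar_smul (hj : Function.Injective j) {φ : H} (hφ : φ ∈ Set.range j) (κ : ℂ) :
    dbar q U j (κ • φ) = κ • dbar q U j φ := by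
  obtain ⟨ψ, rfl⟩ := hφ
  rw [dbar, dbar, invFun_smul_apply hj, Function.leftInverse_invFun hj, map_smul, smul_comm]

theorem mon_mul_eq_zpow_smul (hq : q ≠ 0) (hjU : j * U = (q : ℂ) • (U * j))
    (hAj : ContinuousLinearMap.adjoint U * j = (q : ℂ) • (j * ContinuousLinearMap.adjoint U))
    (n m : ℕ) : mon U n m * j = (q : ℂ) ^ ((n : ℤ) - m) • (j * mon U n m) :=
  pow_mul_pow_mul_eq_zpow_smul hjU hAj (Complex.ofReal_ne_zero.2 hq) n m

theorem mon_apply_mem_range (hq : q ≠ 0) (hjU : j * U = (q : ℂ) • (U * j))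
    (hAj : ContinuousLinearMap.adjoint U * j = (q : ℂ) • (j * ContinuousLinearMap.adjoint U))
    (n m : ℕ) {φ : H} (hφ : φ ∈ Set.range j) : mon U n m φ ∈ Set.range j := by
  obtain ⟨ψ, rfl⟩ := hφ
  exact ⟨_, (apply_apply_eq_of_mul_eq_smul (mon_mul_eq_zpow_smul hq hjU hAj n m) ψ).symm⟩

theorem Mq_eq (q : ℝ) (n : ℕ) : Mq q n = (1 - (q : ℂ) ^ n) / (1 - q) := by
  simp [Mq]

theorem ddel_mon_sub (hq : q ≠ 0) (hq1 : q ≠ 1) (hj : Function.Injective j)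
    (hAU : ContinuousLinearMap.adjoint U * U = 1 - (q : ℂ) • j)
    (hUA : U * ContinuousLinearMap.adjoint U = 1 - j) (hjU : j * U = (q : ℂ) • (U * j))
    (hAj : ContinuousLinearMap.adjoint U * j = (q : ℂ) • (j * ContinuousLinearMap.adjoint U))
    (n m : ℕ) {φ : H} (hφ : φ ∈ Set.range j) :
    ddel q U j (mon U n m φ) - ((q : ℂ) ^ ((n : ℤ) - m)) • mon U n m (ddel q U j φ)
      = ((q : ℂ) ^ ((n : ℤ) - m + 1) * Mq q m) • mon U n (m - 1) φ := by
  obtain ⟨ψ, rfl⟩ := hφ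
  have hqc : (q : ℂ) ≠ 0 := Complex.ofReal_ne_zero.2 hq
  have hq1c : (1 : ℂ) - q ≠ 0 := sub_ne_zero.2 (by exact_mod_cast hq1.symm)
  rw [ddel, ddel, smul_apply_invFun_sub hj (mon_mul_eq_zpow_smul hq hjU hAj n m), mon, mon,
    commutator_adj_pow_mul_pow hAU hUA hjU, smul_apply, mul_apply_eq_comp, smul_smul,
    zpow_add_one₀ hqc, Mq_eq]
  congr 1
  field_simp

theorem dbar_mon_sub (hq : q ≠ 0) (hq1 : q ≠ 1) (hj : Function.Injective j)
    (hAU : ContinuousLinearMap.adjoint U * U = 1 - (q : ℂ) • j)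
    (hUA : U * ContinuousLinearMap.adjoint U = 1 - j) (hjU : j * U = (q : ℂ) • (U * j))
    (hAj : ContinuousLinearMap.adjoint U * j = (q : ℂ) • (j * ContinuousLinearMap.adjoint U))
    (n m : ℕ) {φ : H} (hφ : φ ∈ Set.range j) :
    dbar q U j (mon U n m φ) - ((q : ℂ) ^ ((n : ℤ) - m)) • mon U n m (dbar q U j φ)
      = (Mq q n) • mon U (n - 1) m φ := by
  obtain ⟨ψ, rfl⟩ := hφ
  have hqc : (q : ℂ) ≠ 0 := Complex.ofReal_ne_zero.2 hq
  have hq1c : (q : ℂ) - 1 ≠ 0 := sub_ne_zero.2 (by exact_mod_cast hq1)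
  have hq1c' : (1 : ℂ) - q ≠ 0 := sub_ne_zero.2 (by exact_mod_cast hq1.symm)
  rw [dbar, dbar, smul_apply_invFun_sub hj (mon_mul_eq_zpow_smul hq hjU hAj n m), mon, mon,
    commutator_shift_pow_mul_pow hAU hUA hjU hAj hqc, smul_apply, mul_apply_eq_comp, smul_smul,
    zpow_add_one₀ hqc, zpow_sub₀ hqc, zpow_sub₀ hqc, Mq_eq]
  congr 1
  simp only [zpow_natCast]
  field_simp
  ring

end Derivations

/-- `(U*)ⁿUᵐ` is scalable with `J((U*)ⁿUᵐ) = q^{n−m}(U*)ⁿUᵐ`; on `𝒟`,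
`∂((U*)ⁿUᵐ) = q^{n−m+1}[m]_q (U*)ⁿU^{m−1}` and `∂̄((U*)ⁿUᵐ) = [n]_q (U*)^{n−1}Uᵐ`;
and for `n, m ≥ 1`, `∂̄(∂((U*)ⁿUᵐ)) = q ∂(∂̄((U*)ⁿUᵐ)) = q^{n−m+1}[m]_q[n]_q (U*)^{n−1}U^{m−1}`
on `𝒟`. -/
theorem stmt8 (q : ℝ) (hq0 : 0 < q) (hq1 : q < 1)
    (U : H →L[ℂ] H)
    (hU : ∀ n : ℕ, U (e n) = (Real.sqrt (1 - q ^ (n + 1)) : ℂ) • e (n + 1))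
    (j : H →L[ℂ] H)
    (hj : ∀ n : ℕ, j (e n) = ((q : ℂ) ^ n) • e n)
    (hjinj : Function.Injective (⇑j))
    (n m : ℕ) :
    -- scalability with J((U*)ⁿUᵐ) = q^{n−m}(U*)ⁿUᵐ
    ((mon U n m).comp j = j.comp (((q : ℂ) ^ ((n : ℤ) - m)) • mon U n m)) ∧
    -- ∂((U*)ⁿUᵐ) = q^{n−m+1}[m]_q (U*)ⁿU^{m−1} on 𝒟 (right-hand side 0 when m = 0)
    (∀ φ ∈ Set.range (⇑j),
      ddel q U j (mon U n m φ)
          - ((q : ℂ) ^ ((n : ℤ) - m)) • mon U n m (ddel q U j φ)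
        = ((q : ℂ) ^ ((n : ℤ) - m + 1) * Mq q m) • mon U n (m - 1) φ) ∧
    -- ∂̄((U*)ⁿUᵐ) = [n]_q (U*)^{n−1}Uᵐ on 𝒟 (right-hand side 0 when n = 0)
    (∀ φ ∈ Set.range (⇑j),
      dbar q U j (mon U n m φ)
          - ((q : ℂ) ^ ((n : ℤ) - m)) • mon U n m (dbar q U j φ)
        = (Mq q n) • mon U (n - 1) m φ) ∧
    -- iterated derivatives, for n, m ≥ 1
    (1 ≤ n → 1 ≤ m → ∀ φ ∈ Set.range (⇑j),
      -- ∂̄ applied to ∂((U*)ⁿUᵐ) = q^{n−m+1}[m]_q (U*)ⁿU^{m−1}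
      (dbar q U j ((((q : ℂ) ^ ((n : ℤ) - m + 1) * Mq q m) • mon U n (m - 1)) φ)
          - ((q : ℂ) ^ ((n : ℤ) - (m - 1 : ℕ)) * ((q : ℂ) ^ ((n : ℤ) - m + 1) * Mq q m))
              • mon U n (m - 1) (dbar q U j φ)
        = ((q : ℂ) ^ ((n : ℤ) - m + 1) * Mq q m * Mq q n) • mon U (n - 1) (m - 1) φ) ∧
      -- q times ∂ applied to ∂̄((U*)ⁿUᵐ) = [n]_q (U*)^{n−1}Uᵐ gives the same answer
      ((q : ℂ) • (ddel q U j (((Mq q n) • mon U (n - 1) m) φ)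
          - ((q : ℂ) ^ (((n - 1 : ℕ) : ℤ) - m) * Mq q n) • mon U (n - 1) m (ddel q U j φ))
        = ((q : ℂ) ^ ((n : ℤ) - m + 1) * Mq q m * Mq q n) • mon U (n - 1) (m - 1) φ)) := by
  have hq : q ≠ 0 := hq0.ne'
  have hq1' : q ≠ 1 := hq1.ne
  have hAU := adjoint_mul_self_eq hq0.le hq1.le hU hj
  have hUA := mul_adjoint_eq hq0.le hq1.le hU hj
  have hjU := j_mul_eq_smul hU hj
  have hAj := adjoint_mul_j_eq_smul hU hj
  refine ⟨?_, fun φ hφ => ddel_mon_sub hq hq1' hjinj hAU hUA hjU hAj n m hφ,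
    fun φ hφ => dbar_mon_sub hq hq1' hjinj hAU hUA hjU hAj n m hφ, fun hn _ φ hφ => ⟨?_, ?_⟩⟩
  · rw [ContinuousLinearMap.comp_smul, ← ContinuousLinearMap.mul_def,
      ← ContinuousLinearMap.mul_def]
    exact mon_mul_eq_zpow_smul hq hjU hAj n m
  · have h := dbar_mon_sub hq hq1' hjinj hAU hUA hjU hAj n (m - 1) hφ
    rw [smul_apply, dbar_smul hjinj (mon_apply_mem_range hq hjU hAj n (m - 1) hφ)]
    linear_combination (norm := module) ((q : ℂ) ^ ((n : ℤ) - m + 1) * Mq q m) • h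
  · have h := ddel_mon_sub hq hq1' hjinj hAU hUA hjU hAj (n - 1) m hφ
    rw [smul_apply, ddel_smul hjinj (mon_apply_mem_range hq hjU hAj (n - 1) m hφ),
      Nat.cast_sub hn, Nat.cast_one] at *
    rw [show (n : ℤ) - 1 - m + 1 = n - m by ring] at h
    rw [zpow_add_one₀ (Complex.ofReal_ne_zero.2 hq)]
    linear_combination (norm := module) ((q : ℂ) * Mq q n) • h

end
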